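/- For every input pair (x, y) ∈ Fin 3 × Fin 3, the number of pairs (a, b) ∈ V_A × V_B with a y = b x equals 8, out of the 16 pairs in V_A × V_B. Consequently, under unstructured noise—outputs a and b drawn independently and uniformly from V_A and V_B—each of the nine terms of the Magic Square Bell expression equals 1/2, so the expression takes the value I_noise = 9/2, and the resistance to noise of the Magic Square inequality is p_n = (9 − 8)/(9 − 9/2) = 2/9. -/

import Mathlib

/-- Alice's admissible outputs for the Magic Square game: triples of bits with
even parity. -/
def MagicVA : Type := {a : Fin 3 → ZMod 2 // a 0 + a 1 + a 2 = 0}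

/-- Bob's admissible outputs for the Magic Square game: triples of bits with
odd parity. -/
def MagicVB : Type := {b : Fin 3 → ZMod 2 // b 0 + b 1 + b 2 = 1}

instance : Fintype MagicVA := by unfold MagicVA; infer_instance
instance : Fintype MagicVB := by unfold MagicVB; infer_instance

/-!
Each value of a fixed coordinate is taken by exactly 2 of the 4 bit triples of a given parity, so
`a y` and `b x` are independent uniform bits when `a` and `b` are uniform on `V_A` and `V_B`. Hence
`a y = b x` holds for `2 · 2 + 2 · 2 = 8` of the 16 output pairs, every term of the Bell expression
is `1/2` under noise, and `I_noise = 9/2`.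
-/

open Finset

theorem Fintype.card_eq_card_mul_of_card_fiber_eq {α γ : Type*} [Fintype α] [Fintype γ]
    [DecidableEq γ] (f : α → γ) {n : ℕ} (h : ∀ c, #{a | f a = c} = n) :
    Fintype.card α = Fintype.card γ * n := by
  rw [← card_univ, card_eq_sum_card_fiberwise (f := f) (t := univ) fun _ _ => mem_univ _]
  simp [h]

theorem card_filter_fst_eq_snd {α β γ : Type*} [Fintype α] [Fintype β] [Fintype γ]
    [DecidableEq γ] (f : α → γ) (g : β → γ) :
    #{q : α × β | f q.1 = g q.2} = ∑ c, #{a | f a = c} * #{b | g b = c} := by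
  rw [card_eq_sum_card_fiberwise (f := fun q : α × β => f q.1) (t := univ)
    fun _ _ => mem_univ _]
  refine sum_congr rfl fun c _ => ?_
  rw [← card_product, filter_filter]
  congr 1
  ext ⟨a, b⟩
  simp only [mem_filter, mem_univ, true_and, mem_product]
  constructor
  · rintro ⟨h, rfl⟩
    exact ⟨rfl, h.symm⟩
  · rintro ⟨rfl, h⟩
    exact ⟨h.symm, rfl⟩

theorem MagicVA.card_filter_apply_eq (y : Fin 3) (c : ZMod 2) :
    #{a : MagicVA | a.val y = c} = 2 := by
  revert y c
  decide

theorem MagicVB.card_filter_apply_eq (x : Fin 3) (c : ZMod 2) :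
    #{b : MagicVB | b.val x = c} = 2 := by
  revert x c
  decide

theorem card_filter_magic_win (x y : Fin 3) :
    #{q : MagicVA × MagicVB | q.1.val y = q.2.val x} = 8 := by
  rw [card_filter_fst_eq_snd (fun a : MagicVA => a.val y) (fun b : MagicVB => b.val x)]
  simp only [MagicVA.card_filter_apply_eq, MagicVB.card_filter_apply_eq]
  simp

theorem card_magicVA_prod_magicVB : Fintype.card (MagicVA × MagicVB) = 16 := by
  rw [Fintype.card_prod,
    Fintype.card_eq_card_mul_of_card_fiber_eq _ (MagicVA.card_filter_apply_eq 0),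
    Fintype.card_eq_card_mul_of_card_fiber_eq _ (MagicVB.card_filter_apply_eq 0)]
  simp

/-- **Resistance to noise of the Magic Square inequality.**
For every input pair `(x, y)`, exactly 8 of the 16 output pairs
`(a, b) ∈ V_A × V_B` satisfy the winning condition `a y = b x`.  Consequently
each of the nine terms of the Bell expression equals `1/2` under unstructured
noise, the noise value of the Bell expression is `I_noise = 9/2`, and the
resistance to noise is `p_n = (9 − 8)/(9 − 9/2) = 2/9`. -/
theorem magic_square_noise :
    (∀ x y : Fin 3,
      (Finset.univ.filter
        (fun q : MagicVA × MagicVB => q.1.val y = q.2.val x)).card = 8) ∧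
    Fintype.card (MagicVA × MagicVB) = 16 ∧
    (∑ x : Fin 3, ∑ y : Fin 3,
      ((Finset.univ.filter
        (fun q : MagicVA × MagicVB => q.1.val y = q.2.val x)).card : ℝ) / 16 = 9 / 2) ∧
    ((9 : ℝ) - 8) / (9 - 9 / 2) = 2 / 9 := by
  refine ⟨card_filter_magic_win, card_magicVA_prod_magicVB, ?_, by norm_num⟩
  simp only [card_filter_magic_win]
  norm_num
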